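/- Let ρ, σ be density matrices of the same size. Then d_H(ρ,σ)² ≤ T(ρ,σ) ≤ √2 · d_H(ρ,σ), where d_H is the quantum Hellinger distance and T is the trace distance. -/

import Mathlib

open Matrix
open scoped ComplexOrder

/-- The old Mathlib `Matrix.PosSemidef.sqrt` (removed from Mathlib), with its old definition. -/
noncomputable def Matrix.PosSemidef.sqrt {n : Type*} [Fintype n] [DecidableEq n] {A : Matrix n n ℂ}
    (hA : A.PosSemidef) : Matrix n n ℂ :=
  hA.1.eigenvectorUnitary.1 * diagonal ((↑) ∘ (√·) ∘ hA.1.eigenvalues) *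
    (star hA.1.eigenvectorUnitary : Matrix n n ℂ)

/-- The positive semidefinite square root of a matrix (junk value `0` if not PSD). -/
noncomputable def matSqrt {n : Type*} [Fintype n] [DecidableEq n] (A : Matrix n n ℂ) :
    Matrix n n ℂ :=
  @dite _ A.PosSemidef (Classical.dec _) (fun hA => Matrix.PosSemidef.sqrt hA) (fun _ => 0)

/-- The matrix absolute value `|A| = √(Aᴴ A)`. -/
noncomputable def matAbs {n : Type*} [Fintype n] [DecidableEq n] (A : Matrix n n ℂ) :
    Matrix n n ℂ :=
  Matrix.PosSemidef.sqrt (Matrix.posSemidef_conjTranspose_mul_self A)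

/-- The trace norm `‖A‖₁ = tr √(Aᴴ A)`. -/
noncomputable def traceNorm {n : Type*} [Fintype n] [DecidableEq n] (A : Matrix n n ℂ) : ℝ :=
  ((matAbs A).trace).re

/-- The trace distance `T(ρ, σ) = ½ ‖ρ - σ‖₁`. -/
noncomputable def trDist {n : Type*} [Fintype n] [DecidableEq n] (ρ σ : Matrix n n ℂ) : ℝ :=
  traceNorm (ρ - σ) / 2

/-- The quantum Hellinger distance `d_H(ρ, σ) = √(1 - tr(√ρ √σ))`. -/
noncomputable def hellingerDist {n : Type*} [Fintype n] [DecidableEq n]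
    (ρ σ : Matrix n n ℂ) : ℝ :=
  Real.sqrt (1 - ((matSqrt ρ * matSqrt σ).trace).re)

open scoped MatrixOrder

/-!
Write `A = √ρ`, `B = √σ` and `t = Re tr (A B)`, so that `tr (A - B)² = 2 - 2t = 2 d_H²` and
`tr (A + B)² = 2 + 2t ≤ 4`. The lower bound is the Powers–Størmer inequality
`tr (A - B)² ≤ ‖A² - B²‖₁`. For the upper bound, `A² - B²` is half the anticommutator of `A - B`
and `A + B`, so in an eigenbasis of `A² - B²` each eigenvalue is the real part of a diagonal
entry of `(A - B)(A + B)`, and Cauchy–Schwarz gives `‖A² - B²‖₁ ≤ ‖A - B‖₂ ‖A + B‖₂`.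
-/

section
variable {𝕜 m n : Type*} [RCLike 𝕜] [Fintype m] [Fintype n]

lemma Matrix.re_trace_mul_conjTranspose (P : Matrix n m 𝕜) :
    RCLike.re (P * Pᴴ).trace = ∑ j, ∑ k, ‖P j k‖ ^ 2 := by
  simp only [trace, diag_apply, mul_apply, conjTranspose_apply, RCLike.star_def, RCLike.mul_conj,
    map_sum]
  norm_cast

lemma Matrix.sum_norm_diag_mul_le (P : Matrix n m 𝕜) (Q : Matrix m n 𝕜) :
    ∑ j, ‖(P * Q) j j‖ ≤ √(RCLike.re (P * Pᴴ).trace) * √(RCLike.re (Qᴴ * Q).trace) := by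
  rw [trace_mul_comm Qᴴ, re_trace_mul_conjTranspose, re_trace_mul_conjTranspose]
  calc ∑ j, ‖(P * Q) j j‖ ≤ ∑ j, ∑ k, ‖P j k‖ * ‖Q k j‖ :=
        Finset.sum_le_sum fun j _ => (norm_sum_le _ _).trans_eq (by simp only [norm_mul])
    _ = ∑ p : n × m, ‖P p.1 p.2‖ * ‖Q p.2 p.1‖ := by
        rw [Fintype.sum_prod_type]
    _ ≤ √(∑ p : n × m, ‖P p.1 p.2‖ ^ 2) * √(∑ p : n × m, ‖Q p.2 p.1‖ ^ 2) :=
        Real.sum_mul_le_sqrt_mul_sqrt _ _ _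
    _ = √(∑ j, ∑ k, ‖P j k‖ ^ 2) * √(∑ k, ∑ j, ‖Q k j‖ ^ 2) := by
        simp only [Fintype.sum_prod_type]
        rw [Finset.sum_comm (f := fun j k => ‖Q k j‖ ^ 2)]

lemma Matrix.trace_sub_mul_sub {R : Type*} [CommRing R] (A B : Matrix n n R) :
    ((A - B) * (A - B)).trace = (A * A).trace + (B * B).trace - 2 * (A * B).trace := by
  rw [sub_mul, mul_sub, mul_sub, trace_sub, trace_sub, trace_sub, trace_mul_comm B A]
  ring

lemma Matrix.trace_add_mul_add {R : Type*} [CommRing R] (A B : Matrix n n R) :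
    ((A + B) * (A + B)).trace = (A * A).trace + (B * B).trace + 2 * (A * B).trace := by
  rw [add_mul, mul_add, mul_add, trace_add, trace_add, trace_add, trace_mul_comm B A]
  ring

lemma re_trace_sub_mul_sub_eq {A B : Matrix n n ℂ} (hA1 : (A * A).trace = 1)
    (hB1 : (B * B).trace = 1) : ((A - B) * (A - B)).trace.re = 2 - 2 * (A * B).trace.re := by
  rw [trace_sub_mul_sub, hA1, hB1]
  norm_num

lemma re_trace_add_mul_add_eq {A B : Matrix n n ℂ} (hA1 : (A * A).trace = 1)
    (hB1 : (B * B).trace = 1) : ((A + B) * (A + B)).trace.re = 2 + 2 * (A * B).trace.re := by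
  rw [trace_add_mul_add, hA1, hB1]
  norm_num

end

section
variable {𝕜 n : Type*} [RCLike 𝕜] [Fintype n] [DecidableEq n]

lemma Matrix.sum_norm_sq_row_eq_one_of_mem_unitaryGroup {U : Matrix n n 𝕜}
    (hU : U ∈ unitaryGroup n 𝕜) (j : n) : ∑ i, ‖U j i‖ ^ 2 = 1 := by
  have h := congrFun (congrFun (mem_unitaryGroup_iff.mp hU) j) j
  simp only [mul_apply, star_apply, RCLike.star_def, RCLike.mul_conj, one_apply_eq] at h
  exact_mod_cast h

lemma Matrix.trace_star_mul_mul_of_mem_unitaryGroup {U : Matrix n n 𝕜} (hU : U ∈ unitaryGroup n 𝕜)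
    (A : Matrix n n 𝕜) : (star U * A * U).trace = A.trace := by
  rw [trace_mul_cycle, mem_unitaryGroup_iff.mp hU, one_mul]

lemma Matrix.star_mul_mul_mul_of_mem_unitaryGroup {U : Matrix n n 𝕜} (hU : U ∈ unitaryGroup n 𝕜)
    (P Q : Matrix n n 𝕜) : star U * (P * Q) * U = (star U * P * U) * (star U * Q * U) := by
  simp only [mul_assoc]
  rw [← mul_assoc U, mem_unitaryGroup_iff.mp hU, one_mul]

lemma Matrix.IsHermitian.trace_cfc {A : Matrix n n 𝕜}
    (hA : A.IsHermitian) (f : ℝ → ℝ) : (cfc f A).trace = ∑ i, (f (hA.eigenvalues i) : 𝕜) := by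
  rw [hA.cfc_eq, IsHermitian.cfc, Unitary.conjStarAlgAut_apply, trace_mul_cycle,
    Unitary.coe_star_mul_self, one_mul, trace_diagonal]
  rfl

lemma Matrix.IsHermitian.re_trace_mul_self {A : Matrix n n 𝕜}
    (hA : A.IsHermitian) : RCLike.re (A * A).trace = ∑ i, hA.eigenvalues i ^ 2 := by
  rw [← sq, ← cfc_pow_id (R := ℝ) A 2 hA.isSelfAdjoint, hA.trace_cfc, map_sum]
  simp only [RCLike.ofReal_re]

lemma Matrix.IsHermitian.re_trace_mul_self_nonneg {A : Matrix n n 𝕜} (hA : A.IsHermitian) :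
    0 ≤ RCLike.re (A * A).trace :=
  hA.re_trace_mul_self ▸ Finset.sum_nonneg fun _ _ => sq_nonneg _

lemma Matrix.IsHermitian.mul_self {A : Matrix n n 𝕜} (hA : A.IsHermitian) :
    (A * A).IsHermitian := by
  simpa only [sq] using hA.pow 2

lemma Matrix.IsHermitian.star_eigenvectorUnitary_mul_mul {X : Matrix n n 𝕜} (hX : X.IsHermitian) :
    star (hX.eigenvectorUnitary : Matrix n n 𝕜) * X * (hX.eigenvectorUnitary : Matrix n n 𝕜) =
      diagonal (RCLike.ofReal ∘ hX.eigenvalues) := by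
  simpa using hX.conjStarAlgAut_star_eigenvectorUnitary

/-- The diagonal of `star V * X * V` is a doubly stochastic average of the eigenvalues of `X`. -/
lemma Matrix.IsHermitian.sum_norm_diag_conj_le {X : Matrix n n 𝕜} (hX : X.IsHermitian)
    {V : Matrix n n 𝕜} (hV : V ∈ unitaryGroup n 𝕜) :
    ∑ i, ‖(star V * X * V) i i‖ ≤ ∑ j, |hX.eigenvalues j| := by
  set Q := star (hX.eigenvectorUnitary : Matrix n n 𝕜) * V
  have hQ : Q ∈ unitaryGroup n 𝕜 := mul_mem (Unitary.star_mem hX.eigenvectorUnitary.2) hV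
  have hconj : star V * X * V = star Q * diagonal (RCLike.ofReal ∘ hX.eigenvalues) * Q := by
    conv_lhs => rw [hX.spectral_theorem, Unitary.conjStarAlgAut_apply]
    simp only [Q, star_mul, star_star, mul_assoc]
  have hentry (i : n) : ‖(star V * X * V) i i‖ ≤ ∑ j, |hX.eigenvalues j| * ‖Q j i‖ ^ 2 := by
    rw [hconj, mul_apply]
    refine (norm_sum_le _ _).trans (le_of_eq (Finset.sum_congr rfl fun j _ => ?_))
    simp only [mul_diagonal, star_apply, Function.comp_apply, RCLike.star_def]
    rw [norm_mul, norm_mul, RCLike.norm_conj, RCLike.norm_ofReal]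
    ring
  calc ∑ i, ‖(star V * X * V) i i‖ ≤ ∑ i, ∑ j, |hX.eigenvalues j| * ‖Q j i‖ ^ 2 :=
        Finset.sum_le_sum fun i _ => hentry i
    _ = ∑ j, |hX.eigenvalues j| * ∑ i, ‖Q j i‖ ^ 2 := by
        rw [Finset.sum_comm]
        simp only [Finset.mul_sum]
    _ = ∑ j, |hX.eigenvalues j| := by
        simp only [sum_norm_sq_row_eq_one_of_mem_unitaryGroup hQ, mul_one]

end

section
variable {n : Type*} [Fintype n] [DecidableEq n]

lemma Matrix.PosSemidef.sqrt_eq_cfcSqrt {A : Matrix n n ℂ} (hA : A.PosSemidef) :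
    hA.sqrt = CFC.sqrt A := by
  rw [CFC.sqrt_eq_cfc, cfc_nnreal_eq_real _ A, hA.1.cfc_eq]
  simp only [IsHermitian.cfc, Matrix.PosSemidef.sqrt, Unitary.conjStarAlgAut_apply]
  congr 3
  funext i
  simp [Real.coe_sqrt, Real.coe_toNNReal', max_eq_left (hA.eigenvalues_nonneg i)]

lemma matSqrt_eq_cfcSqrt {A : Matrix n n ℂ} (hA : A.PosSemidef) : matSqrt A = CFC.sqrt A := by
  rw [matSqrt, dif_pos hA, hA.sqrt_eq_cfcSqrt]

lemma Matrix.PosSemidef.posSemidef_matSqrt {A : Matrix n n ℂ} (hA : A.PosSemidef) :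
    (matSqrt A).PosSemidef := by
  rw [matSqrt_eq_cfcSqrt hA]
  exact nonneg_iff_posSemidef.mp (CFC.sqrt_nonneg A)

lemma Matrix.PosSemidef.matSqrt_mul_self {A : Matrix n n ℂ} (hA : A.PosSemidef) :
    matSqrt A * matSqrt A = A := by
  rw [matSqrt_eq_cfcSqrt hA]
  exact CFC.sqrt_mul_sqrt_self A hA.nonneg

lemma matAbs_eq_cfcAbs (A : Matrix n n ℂ) : matAbs A = CFC.abs A := by
  rw [matAbs, Matrix.PosSemidef.sqrt_eq_cfcSqrt, CFC.abs, star_eq_conjTranspose]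

lemma traceNorm_eq_sum_abs_eigenvalues {X : Matrix n n ℂ} (hX : X.IsHermitian) :
    traceNorm X = ∑ i, |hX.eigenvalues i| := by
  rw [traceNorm, matAbs_eq_cfcAbs, CFC.abs_eq_cfc_norm X hX.isSelfAdjoint, hX.trace_cfc]
  simp [Complex.re_sum]

lemma traceNorm_le_of_anticommutator {C D X : Matrix n n ℂ} (hC : C.IsHermitian)
    (hD : D.IsHermitian) (hX : X.IsHermitian) (hCD : C * D + D * C = 2 • X) :
    traceNorm X ≤ √(C * C).trace.re * √(D * D).trace.re := by
  set W : Matrix n n ℂ := ↑hX.eigenvectorUnitary with hWdef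
  have hW : W ∈ unitaryGroup n ℂ := hX.eigenvectorUnitary.2
  have hstar {A : Matrix n n ℂ} (hA : A.IsHermitian) : (star W * A)ᴴ = A * W := by
    rw [← star_eq_conjTranspose, star_mul, star_star, hA.star_eq]
  set M := (star W * C) * (D * W)
  have hMM : M + Mᴴ = 2 • diagonal (RCLike.ofReal ∘ hX.eigenvalues) := by
    rw [← hX.star_eigenvectorUnitary_mul_mul, ← Matrix.smul_mul, ← Matrix.mul_smul, ← hCD,
      conjTranspose_mul, hstar hC, ← star_eq_conjTranspose, star_mul, hD.star_eq, ← hWdef]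
    simp only [M, mul_add, add_mul, mul_assoc]
  have habs (j : n) : |hX.eigenvalues j| ≤ ‖M j j‖ := by
    have h := congrArg Complex.re (congrFun (congrFun hMM j) j)
    simp only [Matrix.add_apply, conjTranspose_apply, RCLike.star_def, Complex.add_re,
      Complex.conj_re, Complex.coe_algebraMap, Matrix.smul_apply, diagonal_apply_eq,
      Function.comp_apply, nsmul_eq_mul, Nat.cast_ofNat, Complex.mul_re, Complex.re_ofNat,
      Complex.ofReal_re, Complex.im_ofNat, Complex.ofReal_im, mul_zero, sub_zero] at h
    calc |hX.eigenvalues j| = |(M j j).re| := by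
          congr 1
          linarith
      _ ≤ ‖M j j‖ := Complex.abs_re_le_norm _
  have htrace {A : Matrix n n ℂ} (hA : A.IsHermitian) :
      ((star W * A) * (star W * A)ᴴ).trace = (A * A).trace := by
    rw [hstar hA, ← mul_assoc, mul_assoc (star W), trace_star_mul_mul_of_mem_unitaryGroup hW]
  calc traceNorm X = ∑ j, |hX.eigenvalues j| := traceNorm_eq_sum_abs_eigenvalues hX
    _ ≤ ∑ j, ‖M j j‖ := Finset.sum_le_sum fun j _ => habs j
    _ ≤ √(RCLike.re ((star W * C) * (star W * C)ᴴ).trace) *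
          √(RCLike.re ((D * W)ᴴ * (D * W)).trace) := sum_norm_diag_mul_le _ _
    _ = √(C * C).trace.re * √(D * D).trace.re := by
        rw [← hstar hD, conjTranspose_conjTranspose, htrace hC, htrace hD]
        rfl

/-- The Powers–Størmer inequality. In an eigenbasis of `A - B`, the diagonal of `A + B` dominates
the absolute eigenvalues `|λᵢ|` because `(A + B) ± (A - B) ≥ 0`, and the anticommutator identity
makes the diagonal of `A² - B²` equal to `λᵢ (A + B)ᵢᵢ`. -/
lemma re_trace_sub_mul_sub_le_traceNorm {A B : Matrix n n ℂ} (hA : A.PosSemidef)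
    (hB : B.PosSemidef) : ((A - B) * (A - B)).trace.re ≤ traceNorm (A * A - B * B) := by
  have hC : (A - B).IsHermitian := hA.1.sub hB.1
  have hX : (A * A - B * B).IsHermitian := hA.1.mul_self.sub hB.1.mul_self
  set U : Matrix n n ℂ := ↑hC.eigenvectorUnitary
  have hU : U ∈ unitaryGroup n ℂ := hC.eigenvectorUnitary.2
  have hΛ : star U * (A - B) * U = diagonal (RCLike.ofReal ∘ hC.eigenvalues) :=
    hC.star_eigenvectorUnitary_mul_mul
  set d := star U * (A + B) * U
  have hle (i : n) : |hC.eigenvalues i| ≤ (d i i).re := by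
    have ha := (hA.conjTranspose_mul_mul_same U).diag_nonneg (i := i)
    have hb := (hB.conjTranspose_mul_mul_same U).diag_nonneg (i := i)
    rw [← star_eq_conjTranspose, Complex.nonneg_iff] at ha hb
    have hdiag := congrArg Complex.re (congrFun (congrFun hΛ i) i)
    simp only [mul_sub, sub_mul, Matrix.sub_apply, Complex.sub_re, Complex.coe_algebraMap,
      diagonal_apply_eq, Function.comp_apply, Complex.ofReal_re] at hdiag
    simp only [d, mul_add, add_mul, Matrix.add_apply, Complex.add_re]
    rw [abs_le]
    constructor <;> linarith [ha.1, hb.1]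
  have hentry (i : n) : (star U * (A * A - B * B) * U) i i = hC.eigenvalues i * d i i := by
    have hanti : (A - B) * (A + B) + (A + B) * (A - B) = 2 • (A * A - B * B) := by noncomm_ring
    have h : diagonal (RCLike.ofReal ∘ hC.eigenvalues) * d +
        d * diagonal (RCLike.ofReal ∘ hC.eigenvalues) = 2 • (star U * (A * A - B * B) * U) := by
      rw [← hΛ, ← star_mul_mul_mul_of_mem_unitaryGroup hU,
        ← star_mul_mul_mul_of_mem_unitaryGroup hU, ← add_mul, ← mul_add, hanti, Matrix.mul_smul,
        Matrix.smul_mul]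
    have h' := congrFun (congrFun h i) i
    simp only [Complex.coe_algebraMap, Matrix.add_apply, diagonal_mul, Function.comp_apply,
      mul_diagonal, Matrix.smul_apply, nsmul_eq_mul, Nat.cast_ofNat] at h'
    linear_combination -h' / 2
  calc ((A - B) * (A - B)).trace.re = ∑ i, hC.eigenvalues i ^ 2 := hC.re_trace_mul_self
    _ ≤ ∑ i, ‖(star U * (A * A - B * B) * U) i i‖ := by
        refine Finset.sum_le_sum fun i _ => ?_
        rw [hentry, norm_mul, Complex.norm_real, Real.norm_eq_abs, sq, ← abs_mul_abs_self]
        exact mul_le_mul_of_nonneg_left ((hle i).trans (Complex.re_le_norm _)) (abs_nonneg _)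
    _ ≤ traceNorm (A * A - B * B) := by
        rw [traceNorm_eq_sum_abs_eigenvalues hX]
        exact hX.sum_norm_diag_conj_le hU

lemma re_trace_mul_le_one {A B : Matrix n n ℂ} (hA : A.IsHermitian) (hB : B.IsHermitian)
    (hA1 : (A * A).trace = 1) (hB1 : (B * B).trace = 1) : (A * B).trace.re ≤ 1 := by
  have : 0 ≤ ((A - B) * (A - B)).trace.re := (hA.sub hB).re_trace_mul_self_nonneg
  linarith [re_trace_sub_mul_sub_eq hA1 hB1]

lemma traceNorm_mul_self_sub_mul_self_le {A B : Matrix n n ℂ} (hA : A.IsHermitian)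
    (hB : B.IsHermitian) (hA1 : (A * A).trace = 1) (hB1 : (B * B).trace = 1) :
    traceNorm (A * A - B * B) ≤ 2 * √2 * √(1 - (A * B).trace.re) := by
  set t := (A * B).trace.re
  have hle := traceNorm_le_of_anticommutator (hA.sub hB) (hA.add hB) (hA.mul_self.sub hB.mul_self)
    (by noncomm_ring : (A - B) * (A + B) + (A + B) * (A - B) = 2 • (A * A - B * B))
  rw [re_trace_sub_mul_sub_eq hA1 hB1, re_trace_add_mul_add_eq hA1 hB1] at hle
  have hadd : √(2 + 2 * t) ≤ 2 :=
    Real.sqrt_le_iff.mpr ⟨zero_le_two, by linarith [re_trace_mul_le_one hA hB hA1 hB1]⟩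
  have hsub : √(2 - 2 * t) = √2 * √(1 - t) := by
    rw [← Real.sqrt_mul zero_le_two]
    ring_nf
  calc traceNorm (A * A - B * B) ≤ √(2 - 2 * t) * √(2 + 2 * t) := hle
    _ ≤ √(2 - 2 * t) * 2 := by gcongr
    _ = 2 * √2 * √(1 - t) := by
        rw [hsub]
        ring

end

/-- `d_H(ρ,σ)² ≤ T(ρ,σ) ≤ √2 · d_H(ρ,σ)`. -/
theorem hellinger_le_trDist_le {n : Type*} [Fintype n] [DecidableEq n]
    (ρ σ : Matrix n n ℂ) (hρ : ρ.PosSemidef) (hρ1 : ρ.trace = 1)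
    (hσ : σ.PosSemidef) (hσ1 : σ.trace = 1) :
    hellingerDist ρ σ ^ 2 ≤ trDist ρ σ ∧ trDist ρ σ ≤ Real.sqrt 2 * hellingerDist ρ σ := by
  set A := matSqrt ρ
  set B := matSqrt σ
  have hA : A.PosSemidef := hρ.posSemidef_matSqrt
  have hB : B.PosSemidef := hσ.posSemidef_matSqrt
  have hAA : A * A = ρ := hρ.matSqrt_mul_self
  have hBB : B * B = σ := hσ.matSqrt_mul_self
  have hA1 : (A * A).trace = 1 := hAA ▸ hρ1
  have hB1 : (B * B).trace = 1 := hBB ▸ hσ1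
  have hH : hellingerDist ρ σ = √(1 - (A * B).trace.re) := rfl
  have hT : trDist ρ σ = traceNorm (A * A - B * B) / 2 := by rw [trDist, hAA, hBB]
  constructor
  · rw [hH, hT, Real.sq_sqrt (by linarith [re_trace_mul_le_one hA.1 hB.1 hA1 hB1])]
    linarith [re_trace_sub_mul_sub_le_traceNorm hA hB, re_trace_sub_mul_sub_eq hA1 hB1]
  · rw [hH, hT]
    linarith [traceNorm_mul_self_sub_mul_self_le hA.1 hB.1 hA1 hB1]
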